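/- arXiv:1204.0566 — 8 statements merged into one kernel-verified Lean document; each statement's English description precedes it below -/
import Mathlib

section
/- For any u ≠ 0, set ν = L̂(u)/‖u‖ in the slack-constrained problem max_{‖w‖≤1, ξ⪰0, 1ᵀξ≤nν} minᵢ (yᵢ⟨w,Φ(xᵢ)⟩ + ξᵢ). Let w̄ with ‖w̄‖ ≤ 1 be an ε̄-suboptimal solution with objective value γ > 0, and set w = w̄/γ. If ε̄‖u‖ < 1, then ‖w‖ ≤ ‖u‖/(1 − ε̄‖u‖) and L̂(w) ≤ L̂(u)/(1 − ε̄‖u‖). -/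
open Finset

/-- Empirical hinge loss `L̂(w) = (1/n) Σᵢ max(0, 1 − yᵢ⟨w,Φ(xᵢ)⟩)`. -/
noncomputable def empHinge {H : Type*} [NormedAddCommGroup H] [InnerProductSpace ℝ H]
    (n : ℕ) (y : Fin n → ℝ) (Φ : Fin n → H) (w : H) : ℝ :=
  (1 / (n : ℝ)) * ∑ i, max 0 (1 - y i * (inner ℝ w (Φ i) : ℝ))

/-- The slack-constrained objective value of a given `w`:
`max_{ξ⪰0, 1ᵀξ≤nν} minᵢ (yᵢ⟨w,Φ(xᵢ)⟩ + ξᵢ)`. -/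
noncomputable def slackVal {H : Type*} [NormedAddCommGroup H] [InnerProductSpace ℝ H]
    (n : ℕ) (ν : ℝ) (y : Fin n → ℝ) (Φ : Fin n → H) (w : H) : ℝ :=
  ⨆ ξ ∈ {ξ : Fin n → ℝ | (∀ i, 0 ≤ ξ i) ∧ ∑ i, ξ i ≤ (n : ℝ) * ν},
    ⨅ i : Fin n, (y i * (inner ℝ w (Φ i) : ℝ) + ξ i)

/-! The hinge losses of `u`, divided by `‖u‖`, are admissible slacks (for this `ν`) with which
`u / ‖u‖` attains margin `1 / ‖u‖`; by suboptimality `γ ≥ 1 / ‖u‖ - ε̄`, which is the norm bound.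
Conversely, slacks `ξ` with which `w̄` attains margin (nearly) `γ` bound the hinge losses of
`w̄ / γ` by `ξ / γ`, so `L̂(w̄ / γ) ≤ ν / γ`. -/

section SlackValue

variable {H : Type*} [NormedAddCommGroup H] [InnerProductSpace ℝ H]
  {n : ℕ} {ν : ℝ} {y : Fin n → ℝ} {Φ : Fin n → H} {w : H}

lemma bddAbove_slackObjective (hn : 0 < n) :
    BddAbove (Set.range fun ξ : Fin n → ℝ =>
      ⨆ _ : ξ ∈ {ξ : Fin n → ℝ | (∀ i, 0 ≤ ξ i) ∧ ∑ i, ξ i ≤ (n : ℝ) * ν},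
        ⨅ i : Fin n, (y i * (inner ℝ w (Φ i) : ℝ) + ξ i)) := by
  let i₀ : Fin n := ⟨0, hn⟩
  refine ⟨max 0 (y i₀ * inner ℝ w (Φ i₀) + n * ν), ?_⟩
  rintro _ ⟨ξ, rfl⟩
  refine Real.iSup_le (fun hξ => le_max_of_le_right ?_) (le_max_left _ _)
  have hξ₀ : ξ i₀ ≤ n * ν :=
    (single_le_sum (fun i _ => hξ.1 i) (mem_univ i₀)).trans hξ.2
  linarith [ciInf_le (Set.finite_range fun i => y i * inner ℝ w (Φ i) + ξ i).bddBelow i₀]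

lemma iInf_margin_le_slackVal (hn : 0 < n) {ξ : Fin n → ℝ} (hξ : ∀ i, 0 ≤ ξ i)
    (hsum : ∑ i, ξ i ≤ n * ν) :
    ⨅ i, (y i * inner ℝ w (Φ i) + ξ i) ≤ slackVal n ν y Φ w :=
  le_ciSup_of_le (bddAbove_slackObjective hn) ξ (by rw [ciSup_pos]; exact ⟨hξ, hsum⟩)

/-- The hypothesis `0 ≤ t` is needed because an infeasible `ξ` contributes the junk value
`0` to the supremum defining `slackVal`. -/
lemma exists_slack_of_lt_slackVal {t : ℝ} (ht : 0 ≤ t) (hlt : t < slackVal n ν y Φ w) :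
    ∃ ξ : Fin n → ℝ, (∀ i, 0 ≤ ξ i) ∧ ∑ i, ξ i ≤ n * ν ∧
      ∀ i, t ≤ y i * inner ℝ w (Φ i) + ξ i := by
  obtain ⟨ξ, hξ⟩ := exists_lt_of_lt_ciSup hlt
  by_cases hfeas : ξ ∈ {ξ : Fin n → ℝ | (∀ i, 0 ≤ ξ i) ∧ ∑ i, ξ i ≤ (n : ℝ) * ν}
  · rw [ciSup_pos hfeas] at hξ
    exact ⟨ξ, hfeas.1, hfeas.2, fun i => hξ.le.trans
      (ciInf_le (Set.finite_range fun i => y i * inner ℝ w (Φ i) + ξ i).bddBelow i)⟩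
  · have : IsEmpty (ξ ∈ {ξ : Fin n → ℝ | (∀ i, 0 ≤ ξ i) ∧ ∑ i, ξ i ≤ (n : ℝ) * ν}) := ⟨hfeas⟩
    rw [Real.iSup_of_isEmpty] at hξ
    exact absurd ht hξ.not_ge

lemma inv_le_slackVal_inv_smul (hn : 0 < n) {c : ℝ} (hc : 0 < c) :
    c⁻¹ ≤ slackVal n (empHinge n y Φ w / c) y Φ (c⁻¹ • w) := by
  have : Nonempty (Fin n) := ⟨⟨0, hn⟩⟩
  let ξ : Fin n → ℝ := fun i => c⁻¹ * max 0 (1 - y i * inner ℝ w (Φ i))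
  have hsum : ∑ i, ξ i = n * (empHinge n y Φ w / c) := by
    simp only [ξ, ← mul_sum, empHinge]
    field_simp
  refine le_trans (le_ciInf fun i => ?_)
    (iInf_margin_le_slackVal hn (fun i => by positivity) hsum.le)
  rw [real_inner_smul_left, mul_left_comm, ← mul_add]
  exact le_mul_of_one_le_right (by positivity)
    (by linarith [le_max_right 0 (1 - y i * inner ℝ w (Φ i))])

lemma empHinge_inv_smul_le (hn : 0 < n) {t : ℝ} (ht : 0 < t) {ξ : Fin n → ℝ}
    (hξ : ∀ i, 0 ≤ ξ i) (hsum : ∑ i, ξ i ≤ n * ν)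
    (hmargin : ∀ i, t ≤ y i * inner ℝ w (Φ i) + ξ i) :
    empHinge n y Φ (t⁻¹ • w) ≤ ν / t := by
  have hnR : (0 : ℝ) < n := by exact_mod_cast hn
  have hterm : ∀ i, max 0 (1 - y i * inner ℝ (t⁻¹ • w) (Φ i)) ≤ ξ i / t := fun i => by
    rw [real_inner_smul_left]
    refine max_le (div_nonneg (hξ i) ht.le) ?_
    rw [le_div_iff₀ ht]
    have := hmargin i
    field_simp
    linarith
  calc empHinge n y Φ (t⁻¹ • w) ≤ 1 / n * ∑ i, ξ i / t :=
        mul_le_mul_of_nonneg_left (sum_le_sum fun i _ => hterm i) (by positivity)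
    _ = (∑ i, ξ i) / n / t := by rw [← sum_div]; ring
    _ ≤ ν / t := by gcongr; rwa [div_le_iff₀' hnR]

lemma empHinge_inv_smul_slackVal_le (hn : 0 < n) (hpos : 0 < slackVal n ν y Φ w) :
    empHinge n y Φ ((slackVal n ν y Φ w)⁻¹ • w) ≤ ν / slackVal n ν y Φ w := by
  set γ := slackVal n ν y Φ w
  refine le_of_forall_pos_le_add fun ε hε => ?_
  have hεγ : 0 < ε * γ := by positivity
  obtain ⟨ξ, hξ, hsum, hmargin⟩ := exists_slack_of_lt_slackVal (le_max_left 0 (γ - ε * γ))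
    (max_lt hpos (by linarith))
  -- shifting every slack by `ε γ` restores the full margin `γ`
  have key : empHinge n y Φ (γ⁻¹ • w) ≤ (ν + ε * γ) / γ :=
    empHinge_inv_smul_le hn hpos (ξ := fun i => ξ i + ε * γ)
      (fun i => add_nonneg (hξ i) hεγ.le)
      (by rw [sum_add_distrib, sum_const, card_univ, Fintype.card_fin, nsmul_eq_mul]; linarith)
      (fun i => by linarith [hmargin i, le_max_right 0 (γ - ε * γ)])
  rwa [add_div, mul_div_cancel_right₀ _ hpos.ne'] at key

end SlackValue

theorem slack_constrained_suboptimality_general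
    {H : Type*} [NormedAddCommGroup H] [InnerProductSpace ℝ H]
    (n : ℕ) (hn : 0 < n)
    (y : Fin n → ℝ) (Φ : Fin n → H)
    (u : H) (hu : u ≠ 0)
    (ν : ℝ) (hν : ν = empHinge n y Φ u / ‖u‖)
    (wbar : H) (hwbar : ‖wbar‖ ≤ 1)
    (εbar γ : ℝ)
    (hγ : γ = slackVal n ν y Φ wbar) (hγpos : 0 < γ)
    -- `wbar` is `εbar`-suboptimal for the slack-constrained problem
    (hsub : ∀ w : H, ‖w‖ ≤ 1 → slackVal n ν y Φ w ≤ γ + εbar)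
    (hlt : εbar * ‖u‖ < 1) :
    ‖γ⁻¹ • wbar‖ ≤ ‖u‖ / (1 - εbar * ‖u‖) ∧
      empHinge n y Φ (γ⁻¹ • wbar) ≤ empHinge n y Φ u / (1 - εbar * ‖u‖) := by
  have hupos : 0 < ‖u‖ := norm_pos_iff.mpr hu
  have hgap : 0 < 1 - εbar * ‖u‖ := by linarith
  have hunit : ‖‖u‖⁻¹ • u‖ ≤ 1 := by
    rw [norm_smul, norm_inv, norm_norm, inv_mul_cancel₀ hupos.ne']
  have hγlower : (1 - εbar * ‖u‖) / ‖u‖ ≤ γ := by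
    have := (hν ▸ inv_le_slackVal_inv_smul (y := y) (Φ := Φ) hn hupos).trans (hsub _ hunit)
    rw [sub_div, mul_div_cancel_right₀ _ hupos.ne', one_div]
    linarith
  have hγinv : γ⁻¹ ≤ ‖u‖ / (1 - εbar * ‖u‖) := by
    simpa using inv_anti₀ (by positivity) hγlower
  have hLnonneg : 0 ≤ empHinge n y Φ u :=
    mul_nonneg (by positivity) (sum_nonneg fun i _ => le_max_left _ _)
  constructor
  · rw [norm_smul, norm_inv, Real.norm_of_nonneg hγpos.le]
    exact (mul_le_of_le_one_right (by positivity) hwbar).trans hγinv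
  · calc empHinge n y Φ (γ⁻¹ • wbar) ≤ ν / γ :=
        hγ ▸ empHinge_inv_smul_slackVal_le hn (hγ ▸ hγpos)
      _ = empHinge n y Φ u / ‖u‖ * γ⁻¹ := by rw [hν, div_eq_mul_inv]
      _ ≤ empHinge n y Φ u / ‖u‖ * (‖u‖ / (1 - εbar * ‖u‖)) := by gcongr
      _ = empHinge n y Φ u / (1 - εbar * ‖u‖) := by field_simp

theorem slack_constrained_suboptimality
    {H : Type*} [NormedAddCommGroup H] [InnerProductSpace ℝ H]
    (n : ℕ) (hn : 0 < n)
    (y : Fin n → ℝ) (hy : ∀ i, y i = 1 ∨ y i = -1) (Φ : Fin n → H)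
    (u : H) (hu : u ≠ 0)
    (ν : ℝ) (hν : ν = empHinge n y Φ u / ‖u‖)
    (wbar : H) (hwbar : ‖wbar‖ ≤ 1)
    (εbar γ : ℝ) (hεbar : 0 ≤ εbar)
    (hγ : γ = slackVal n ν y Φ wbar) (hγpos : 0 < γ)
    -- `wbar` is `εbar`-suboptimal for the slack-constrained problem
    (hsub : ∀ w : H, ‖w‖ ≤ 1 → slackVal n ν y Φ w ≤ γ + εbar)
    (hlt : εbar * ‖u‖ < 1) :
    ‖γ⁻¹ • wbar‖ ≤ ‖u‖ / (1 - εbar * ‖u‖) ∧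
      empHinge n y Φ (γ⁻¹ • wbar) ≤ empHinge n y Φ u / (1 - εbar * ‖u‖) :=
  slack_constrained_suboptimality_general n hn y Φ u hu ν hν wbar hwbar εbar γ hγ hγpos hsub hlt
end

section
/- Fix c ∈ ℝⁿ, V > 0, and let γ satisfy Σᵢ (γ − cᵢ)₊ = V. Let S = {i : cᵢ ≤ γ} and let p* be the uniform distribution on S. Then p* is a minimizer of p ↦ pᵀ(c + ξ*) over the probability simplex, where ξ*ᵢ = (γ − cᵢ)₊, and moreover (p*, ξ*) is a minimax optimal pair: ξ* maximizes ξ ↦ (p*)ᵀ(c+ξ) over {ξ ⪰ 0, 1ᵀξ ≤ V}. -/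
/-!
On the wet set `S = {i | cᵢ ≤ γ}` the water fills every column up to the level `γ`, so
`cᵢ + ξ*ᵢ = max cᵢ γ` equals `γ` on `S` and is at least `γ` everywhere: any distribution pays
at least `γ` against `ξ*`, and the uniform distribution on `S` pays exactly `γ`. Conversely,
against the uniform distribution on `S` any budget `ξ` with `∑ ξ ≤ V = ∑_{i ∈ S} (γ - cᵢ)`
raises the average of `c + ξ` over `S` to at most `γ`. The water level equation with `V > 0`
also forces `S ≠ ∅`, so the uniform distribution on `S` exists.
-/

open Finset

variable {ι : Type*} [Fintype ι] (c : ι → ℝ) (γ : ℝ)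

noncomputable def wetSet : Finset ι := univ.filter fun j => c j ≤ γ

noncomputable def uniformOnWetSet (i : ι) : ℝ := if c i ≤ γ then ((wetSet c γ).card : ℝ)⁻¹ else 0

lemma add_max_zero_sub (a b : ℝ) : a + max 0 (b - a) = max a b := by
  rw [← max_add_add_left, add_zero, add_sub_cancel]

lemma sum_max_zero_sub_eq_sum_wetSet :
    ∑ i, max 0 (γ - c i) = ∑ i ∈ wetSet c γ, (γ - c i) := by
  rw [wetSet, sum_filter]
  refine sum_congr rfl fun i _ => ?_
  split_ifs with h
  · exact max_eq_right (sub_nonneg.mpr h)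
  · exact max_eq_left (sub_nonpos.mpr (not_le.mp h).le)

lemma wetSet_nonempty_of_sum_max_zero_sub_pos (h : 0 < ∑ i, max 0 (γ - c i)) :
    (wetSet c γ).Nonempty := by
  rw [sum_max_zero_sub_eq_sum_wetSet] at h
  exact nonempty_of_sum_ne_zero h.ne'

lemma uniformOnWetSet_nonneg (i : ι) : 0 ≤ uniformOnWetSet c γ i := by
  unfold uniformOnWetSet
  split_ifs <;> positivity

lemma sum_uniformOnWetSet_mul (f : ι → ℝ) :
    ∑ i, uniformOnWetSet c γ i * f i = ((wetSet c γ).card : ℝ)⁻¹ * ∑ i ∈ wetSet c γ, f i := by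
  simp only [uniformOnWetSet, ite_mul, zero_mul]
  rw [← sum_filter, mul_sum, wetSet]

variable {c γ}

lemma sum_uniformOnWetSet (hS : (wetSet c γ).Nonempty) : ∑ i, uniformOnWetSet c γ i = 1 := by
  simpa using sum_uniformOnWetSet_mul c γ 1 |>.trans (by simp [hS.card_pos.ne'])

lemma sum_uniformOnWetSet_mul_max (hS : (wetSet c γ).Nonempty) :
    ∑ i, uniformOnWetSet c γ i * max (c i) γ = γ := by
  have hmax : ∀ i ∈ wetSet c γ, max (c i) γ = γ := fun i hi =>
    max_eq_right (mem_filter.mp hi).2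
  rw [sum_uniformOnWetSet_mul, sum_congr rfl hmax, sum_const, nsmul_eq_mul,
    inv_mul_cancel_left₀ (by exact_mod_cast hS.card_pos.ne')]

lemma le_sum_mul_max {p : ι → ℝ} (hp : ∀ i, 0 ≤ p i) (hp1 : ∑ i, p i = 1) :
    γ ≤ ∑ i, p i * max (c i) γ :=
  calc γ = ∑ i, p i * γ := by rw [← sum_mul, hp1, one_mul]
    _ ≤ ∑ i, p i * max (c i) γ :=
      sum_le_sum fun i _ => mul_le_mul_of_nonneg_left (le_max_right _ _) (hp i)

lemma sum_uniformOnWetSet_mul_add_le (hS : (wetSet c γ).Nonempty) {ξ : ι → ℝ}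
    (hξ : ∀ i, 0 ≤ ξ i) (hξV : ∑ i, ξ i ≤ ∑ i ∈ wetSet c γ, (γ - c i)) :
    ∑ i, uniformOnWetSet c γ i * (c i + ξ i) ≤ γ := by
  have hξS : ∑ i ∈ wetSet c γ, ξ i ≤ ∑ i, ξ i :=
    sum_le_sum_of_subset_of_nonneg (subset_univ _) fun i _ _ => hξ i
  have hsum : ∑ i ∈ wetSet c γ, (c i + ξ i) ≤ (wetSet c γ).card * γ := by
    rw [sum_sub_distrib, sum_const, nsmul_eq_mul] at hξV
    rw [sum_add_distrib]
    linarith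
  have hcard : (0 : ℝ) < (wetSet c γ).card := by exact_mod_cast hS.card_pos
  rw [sum_uniformOnWetSet_mul, inv_mul_le_iff₀ hcard]
  linarith

theorem uniform_on_wet_set_minimax_optimal_general
    (n : ℕ) (c : Fin n → ℝ) (V γ : ℝ) (hV : 0 < V)
    -- the water level equation Σᵢ (γ − cᵢ)₊ = V
    (hγ : ∑ i, max 0 (γ - c i) = V) :
    -- p*, the uniform distribution on S = {i : cᵢ ≤ γ}, is a probability vector
    (∀ i, 0 ≤ (if c i ≤ γ then ((Finset.univ.filter (fun j : Fin n => c j ≤ γ)).card : ℝ)⁻¹ else 0)) ∧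
    (∑ i, (if c i ≤ γ then ((Finset.univ.filter (fun j : Fin n => c j ≤ γ)).card : ℝ)⁻¹ else 0)) = 1 ∧
    -- p* minimizes p ↦ pᵀ(c + ξ*) over the probability simplex, where ξ*ᵢ = (γ − cᵢ)₊
    (∀ p : Fin n → ℝ, (∀ i, 0 ≤ p i) → ∑ i, p i = 1 →
      ∑ i, (if c i ≤ γ then ((Finset.univ.filter (fun j : Fin n => c j ≤ γ)).card : ℝ)⁻¹ else 0) *
          (c i + max 0 (γ - c i)) ≤
        ∑ i, p i * (c i + max 0 (γ - c i))) ∧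
    -- ξ* maximizes ξ ↦ (p*)ᵀ(c + ξ) over {ξ ⪰ 0, 1ᵀξ ≤ V}
    (∀ ξ : Fin n → ℝ, (∀ i, 0 ≤ ξ i) → ∑ i, ξ i ≤ V →
      ∑ i, (if c i ≤ γ then ((Finset.univ.filter (fun j : Fin n => c j ≤ γ)).card : ℝ)⁻¹ else 0) *
          (c i + ξ i) ≤
        ∑ i, (if c i ≤ γ then ((Finset.univ.filter (fun j : Fin n => c j ≤ γ)).card : ℝ)⁻¹ else 0) *
          (c i + max 0 (γ - c i))) := by
  have hS : (wetSet c γ).Nonempty := wetSet_nonempty_of_sum_max_zero_sub_pos c γ (hγ ▸ hV)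
  have hvalue : ∑ i, uniformOnWetSet c γ i * (c i + max 0 (γ - c i)) = γ := by
    simp only [add_max_zero_sub]
    exact sum_uniformOnWetSet_mul_max hS
  refine ⟨uniformOnWetSet_nonneg c γ, sum_uniformOnWetSet hS, fun p hp hp1 => ?_,
    fun ξ hξ hξV => ?_⟩
  · change ∑ i, uniformOnWetSet c γ i * _ ≤ _
    rw [hvalue]
    simpa only [add_max_zero_sub] using le_sum_mul_max hp hp1
  · change ∑ i, uniformOnWetSet c γ i * _ ≤ ∑ i, uniformOnWetSet c γ i * _
    rw [hvalue]
    rw [← hγ, sum_max_zero_sub_eq_sum_wetSet] at hξV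
    exact sum_uniformOnWetSet_mul_add_le hS hξ hξV

theorem uniform_on_wet_set_minimax_optimal
    (n : ℕ) (hn : 0 < n) (c : Fin n → ℝ) (V γ : ℝ) (hV : 0 < V)
    -- the water level equation Σᵢ (γ − cᵢ)₊ = V
    (hγ : ∑ i, max 0 (γ - c i) = V) :
    -- p*, the uniform distribution on S = {i : cᵢ ≤ γ}, is a probability vector
    (∀ i, 0 ≤ (if c i ≤ γ then ((Finset.univ.filter (fun j : Fin n => c j ≤ γ)).card : ℝ)⁻¹ else 0)) ∧
    (∑ i, (if c i ≤ γ then ((Finset.univ.filter (fun j : Fin n => c j ≤ γ)).card : ℝ)⁻¹ else 0)) = 1 ∧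
    -- p* minimizes p ↦ pᵀ(c + ξ*) over the probability simplex, where ξ*ᵢ = (γ − cᵢ)₊
    (∀ p : Fin n → ℝ, (∀ i, 0 ≤ p i) → ∑ i, p i = 1 →
      ∑ i, (if c i ≤ γ then ((Finset.univ.filter (fun j : Fin n => c j ≤ γ)).card : ℝ)⁻¹ else 0) *
          (c i + max 0 (γ - c i)) ≤
        ∑ i, p i * (c i + max 0 (γ - c i))) ∧
    -- ξ* maximizes ξ ↦ (p*)ᵀ(c + ξ) over {ξ ⪰ 0, 1ᵀξ ≤ V}
    (∀ ξ : Fin n → ℝ, (∀ i, 0 ≤ ξ i) → ∑ i, ξ i ≤ V →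
      ∑ i, (if c i ≤ γ then ((Finset.univ.filter (fun j : Fin n => c j ≤ γ)).card : ℝ)⁻¹ else 0) *
          (c i + ξ i) ≤
        ∑ i, (if c i ≤ γ then ((Finset.univ.filter (fun j : Fin n => c j ≤ γ)).card : ℝ)⁻¹ else 0) *
          (c i + max 0 (γ - c i))) :=
  uniform_on_wet_set_minimax_optimal_general n c V γ hV hγ
end

section
/- Let M be the number of mistakes made by the online Perceptron on a sequence (x₁,y₁),…,(xₙ,yₙ) with ‖Φ(xᵢ)‖ ≤ r. Then for any u, M ≤ Σ_{i∈M} ℓ(yᵢ⟨u,Φ(xᵢ)⟩) + r‖u‖√(Σ_{i∈M} ℓ(yᵢ⟨u,Φ(xᵢ)⟩)) + r²‖u‖², where ℓ(a) = max(0,1−a) and the sums are over the mistake rounds; in particular M ≤ Σᵢ ℓ(yᵢ⟨u,Φ(xᵢ)⟩) + r‖u‖√(Σᵢ ℓ(yᵢ⟨u,Φ(xᵢ)⟩)) + r²‖u‖². -/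
/-!
On a mistake round the cross term `2 y⟪w, Φ⟫` is nonpositive, so `‖w‖²` grows by at most `r²`;
hence `‖w_n‖ ≤ r √M`. On the other hand `⟪u, w_n⟫ = ∑_{mistakes} y⟪u, Φ⟫ ≥ M - L`, where `L` is
the hinge loss of `u` on the mistake rounds, since `1 ≤ ℓ(a) + a`. Cauchy–Schwarz gives
`M ≤ L + r‖u‖ √M`, and solving this quadratic inequality in `√M` gives the bound.
-/

open Finset RealInnerProductSpace

/-- The quadratic `s ^ 2 - a * s - L` is nonnegative at `s = √L + a`. -/
theorem Real.sqrt_le_sqrt_add_of_le_add_mul_sqrt {m L a : ℝ} (hL : 0 ≤ L) (ha : 0 ≤ a)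
    (h : m ≤ L + a * √m) : √m ≤ √L + a := by
  by_contra! hlt
  have hm : 0 < m := Real.sqrt_pos.mp (lt_of_le_of_lt (by positivity) hlt)
  have hsq_m : √m ^ 2 = m := Real.sq_sqrt hm.le
  have hsq_L : √L ^ 2 = L := Real.sq_sqrt hL
  nlinarith [Real.sqrt_nonneg L, mul_lt_mul_of_pos_left hlt (Real.sqrt_pos.mpr hm)]

theorem Real.le_add_mul_sqrt_add_sq_of_le_add_mul_sqrt {m L a : ℝ} (hL : 0 ≤ L) (ha : 0 ≤ a)
    (h : m ≤ L + a * √m) : m ≤ L + a * √L + a ^ 2 :=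
  calc m ≤ L + a * √m := h
    _ ≤ L + a * (√L + a) := by
      gcongr; exact Real.sqrt_le_sqrt_add_of_le_add_mul_sqrt hL ha h
    _ = L + a * √L + a ^ 2 := by ring

theorem Fin.sum_univ_sub {G : Type*} [AddCommGroup G] (f : ℕ → G) (n : ℕ) :
    ∑ i : Fin n, (f (i + 1) - f i) = f n - f 0 :=
  (Fin.sum_univ_eq_sum_range (fun i => f (i + 1) - f i) n).trans (sum_range_sub f n)

namespace Perceptron

variable {H : Type*} [NormedAddCommGroup H] [InnerProductSpace ℝ H] {n : ℕ}
  {y : Fin n → ℝ} {Φ : Fin n → H} {w : ℕ → H}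

noncomputable def mistakes (y : Fin n → ℝ) (Φ : Fin n → H) (w : ℕ → H) : Finset (Fin n) :=
  univ.filter fun i => y i * ⟪w i, Φ i⟫ ≤ 0

@[simp]
theorem mem_mistakes {i : Fin n} : i ∈ mistakes y Φ w ↔ y i * ⟪w i, Φ i⟫ ≤ 0 := by
  simp [mistakes]

section Run

variable (hstep : ∀ i : Fin n,
  w (i + 1) = if y i * ⟪w i, Φ i⟫ ≤ 0 then w i + y i • Φ i else w i)
include hstep

theorem succ_eq_add_ite (i : Fin n) :
    w (i + 1) = w i + if i ∈ mistakes y Φ w then y i • Φ i else 0 := by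
  simp only [hstep i, mem_mistakes]
  split_ifs <;> simp

theorem inner_sub_eq_sum_mistakes (u : H) :
    ⟪u, w n - w 0⟫ = ∑ i ∈ mistakes y Φ w, y i * ⟪u, Φ i⟫ := by
  rw [← Fin.sum_univ_sub, inner_sum, ← univ_inter (mistakes y Φ w), ← sum_ite_mem]
  refine sum_congr rfl fun i _ => ?_
  rw [succ_eq_add_ite hstep i, add_sub_cancel_left, apply_ite (inner ℝ u), inner_zero_right,
    real_inner_smul_right]

theorem norm_sq_succ_sub_le {r : ℝ} (hupd : ∀ i, ‖y i • Φ i‖ ≤ r) (i : Fin n) :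
    ‖w (i + 1)‖ ^ 2 - ‖w i‖ ^ 2 ≤ if i ∈ mistakes y Φ w then r ^ 2 else 0 := by
  rw [succ_eq_add_ite hstep i]
  split_ifs with hmis
  · rw [mem_mistakes] at hmis
    rw [norm_add_sq_real, real_inner_smul_right]
    nlinarith [pow_le_pow_left₀ (norm_nonneg _) (hupd i) 2]
  · simp

theorem norm_sq_sub_le_card_mistakes_mul {r : ℝ} (hupd : ∀ i, ‖y i • Φ i‖ ≤ r) :
    ‖w n‖ ^ 2 - ‖w 0‖ ^ 2 ≤ #(mistakes y Φ w) * r ^ 2 :=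
  calc ‖w n‖ ^ 2 - ‖w 0‖ ^ 2 = ∑ i : Fin n, (‖w (i + 1)‖ ^ 2 - ‖w i‖ ^ 2) :=
        (Fin.sum_univ_sub (fun k => ‖w k‖ ^ 2) n).symm
    _ ≤ ∑ i : Fin n, if i ∈ mistakes y Φ w then r ^ 2 else 0 :=
        sum_le_sum fun i _ => norm_sq_succ_sub_le hstep hupd i
    _ = #(mistakes y Φ w) * r ^ 2 := by
        rw [sum_ite_mem, univ_inter, sum_const, nsmul_eq_mul]

theorem card_mistakes_le (hw0 : w 0 = 0) {r : ℝ} (hr : 0 ≤ r)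
    (hupd : ∀ i, ‖y i • Φ i‖ ≤ r) (u : H) :
    (#(mistakes y Φ w) : ℝ) ≤
      (∑ i ∈ mistakes y Φ w, max 0 (1 - y i * ⟪u, Φ i⟫)) +
      r * ‖u‖ * √(∑ i ∈ mistakes y Φ w, max 0 (1 - y i * ⟪u, Φ i⟫)) + r ^ 2 * ‖u‖ ^ 2 := by
  set m : ℝ := (#(mistakes y Φ w) : ℝ)
  set L := ∑ i ∈ mistakes y Φ w, max 0 (1 - y i * ⟪u, Φ i⟫)
  have hL : 0 ≤ L := sum_nonneg fun i _ => le_max_left _ _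
  have hmargin : m ≤ L + ⟪u, w n⟫ := by
    rw [← sub_zero (w n), ← hw0, inner_sub_eq_sum_mistakes hstep, ← sum_add_distrib]
    calc m = ∑ _i ∈ mistakes y Φ w, (1 : ℝ) := by rw [sum_const, nsmul_one]
      _ ≤ _ := sum_le_sum fun i _ => by linarith [le_max_right 0 (1 - y i * ⟪u, Φ i⟫)]
  have hnorm : ‖w n‖ ≤ r * √m := by
    have hsq := norm_sq_sub_le_card_mistakes_mul hstep hupd
    rw [hw0, norm_zero] at hsq
    rw [← Real.sqrt_sq hr, ← Real.sqrt_mul (sq_nonneg r)]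
    exact Real.le_sqrt_of_sq_le (by linarith)
  have hgrowth : m ≤ L + r * ‖u‖ * √m :=
    calc m ≤ L + ⟪u, w n⟫ := hmargin
      _ ≤ L + ‖u‖ * ‖w n‖ := by gcongr; exact real_inner_le_norm u (w n)
      _ ≤ L + ‖u‖ * (r * √m) := by gcongr
      _ = L + r * ‖u‖ * √m := by ring
  have hbound := Real.le_add_mul_sqrt_add_sq_of_le_add_mul_sqrt hL (by positivity) hgrowth
  rwa [mul_pow] at hbound

end Run

end Perceptron

theorem perceptron_mistake_bound
    {H : Type*} [NormedAddCommGroup H] [InnerProductSpace ℝ H]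
    (n : ℕ) (r : ℝ) (hr : 0 ≤ r)
    (y : Fin n → ℝ) (hy : ∀ i, y i = 1 ∨ y i = -1)
    (Φ : Fin n → H) (hΦ : ∀ i, ‖Φ i‖ ≤ r)
    (w : ℕ → H) (hw0 : w 0 = 0)
    -- online Perceptron updates
    (hstep : ∀ i : Fin n,
      w ((i : ℕ) + 1) =
        if y i * (inner ℝ (w (i : ℕ)) (Φ i) : ℝ) ≤ 0
        then w (i : ℕ) + y i • Φ i
        else w (i : ℕ))
    (u : H) :
    -- mistake bound with hinge losses summed over the mistake rounds
    (((Finset.univ.filter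
        (fun i : Fin n => y i * (inner ℝ (w (i : ℕ)) (Φ i) : ℝ) ≤ 0)).card : ℝ) ≤
      (∑ i ∈ Finset.univ.filter
          (fun i : Fin n => y i * (inner ℝ (w (i : ℕ)) (Φ i) : ℝ) ≤ 0),
        max 0 (1 - y i * (inner ℝ u (Φ i) : ℝ))) +
      r * ‖u‖ * Real.sqrt (∑ i ∈ Finset.univ.filter
          (fun i : Fin n => y i * (inner ℝ (w (i : ℕ)) (Φ i) : ℝ) ≤ 0),
        max 0 (1 - y i * (inner ℝ u (Φ i) : ℝ))) +
      r ^ 2 * ‖u‖ ^ 2) ∧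
    -- in particular, with hinge losses summed over all rounds
    (((Finset.univ.filter
        (fun i : Fin n => y i * (inner ℝ (w (i : ℕ)) (Φ i) : ℝ) ≤ 0)).card : ℝ) ≤
      (∑ i, max 0 (1 - y i * (inner ℝ u (Φ i) : ℝ))) +
      r * ‖u‖ * Real.sqrt (∑ i, max 0 (1 - y i * (inner ℝ u (Φ i) : ℝ))) +
      r ^ 2 * ‖u‖ ^ 2) := by
  have hupd (i : Fin n) : ‖y i • Φ i‖ ≤ r := by
    rcases hy i with h | h <;> simpa [h, norm_smul] using hΦ i
  have hbound := Perceptron.card_mistakes_le hstep hw0 hr hupd u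
  have hloss : ∑ i ∈ Perceptron.mistakes y Φ w, max 0 (1 - y i * ⟪u, Φ i⟫) ≤
      ∑ i, max 0 (1 - y i * ⟪u, Φ i⟫) :=
    sum_le_sum_of_subset_of_nonneg (subset_univ _) fun i _ _ => le_max_left _ _
  refine ⟨hbound, hbound.trans ?_⟩
  gcongr
end

section
/- For every ε > 0 there exists an SVM problem (a data distribution, a finite sample, and regularization λ = 2ε) together with a dual feasible point α ∈ [0, 1/(λn)]ⁿ such that α is ε-suboptimal in the dual objective D, while the corresponding primal point w = Σᵢ αᵢ yᵢ xᵢ satisfies P(w) − P* ≥ 1 − ε. Concretely, α = 0 works: there exists u with ‖u‖ = 1 and zero hinge loss on the data, P* ≤ ε, D* − D(0) ≤ ε, and P(0) − P* ≥ 1 − ε. -/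
/-!
Weak duality does all the work. For a dual-feasible `α`, put `v = ∑ αᵢ yᵢ xᵢ`; since
`0 ≤ λ αᵢ ≤ 1/n`, each hinge term dominates `λ αᵢ (1 - yᵢ⟪w, xᵢ⟫)`, and summing gives
`P(w) - D(α) ≥ (λ/2)‖w - v‖² ≥ 0`. On data separated with margin by a unit vector `u` the
hinge loss of `u` vanishes, so `D* ≤ P* ≤ P(u) = λ/2`, while `D(0) = 0` and `P(0) = 1`.
With `λ = 2ε` a single point `x = 1`, `y = 1` on the real line is such data.
-/

open Finset RealInnerProductSpace

section SVM

variable {E : Type*} [NormedAddCommGroup E] [InnerProductSpace ℝ E] {n : ℕ}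

noncomputable def svmPrimal (lam : ℝ) (x : Fin n → E) (y : Fin n → ℝ) (w : E) : ℝ :=
  lam / 2 * ‖w‖ ^ 2 + (1 / (n : ℝ)) * ∑ i, max 0 (1 - y i * ⟪w, x i⟫)

noncomputable def svmDual (lam : ℝ) (x : Fin n → E) (y : Fin n → ℝ) (α : Fin n → ℝ) : ℝ :=
  lam * ((∑ i, α i) - 1 / 2 * ∑ i, ∑ j, α i * α j * (y i * y j * ⟪x i, x j⟫))

def svmDualFeasible (lam : ℝ) (n : ℕ) : Set (Fin n → ℝ) :=
  {α | ∀ i, α i ∈ Set.Icc 0 (1 / (lam * n))}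

variable {lam : ℝ} {x : Fin n → E} {y : Fin n → ℝ}

theorem sum_sum_mul_inner_eq_norm_sq (α : Fin n → ℝ) :
    ∑ i, ∑ j, α i * α j * (y i * y j * ⟪x i, x j⟫) = ‖∑ i, (α i * y i) • x i‖ ^ 2 := by
  rw [← real_inner_self_eq_norm_sq, sum_inner]
  refine sum_congr rfl fun i _ => ?_
  rw [inner_sum]
  refine sum_congr rfl fun j _ => ?_
  rw [real_inner_smul_left, real_inner_smul_right]
  ring

theorem svmDual_eq (α : Fin n → ℝ) :
    svmDual lam x y α = lam * ((∑ i, α i) - 1 / 2 * ‖∑ i, (α i * y i) • x i‖ ^ 2) := by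
  rw [svmDual, sum_sum_mul_inner_eq_norm_sq]

@[simp]
theorem svmDual_zero : svmDual lam x y 0 = 0 := by
  simp [svmDual]

theorem svmPrimal_nonneg (hlam : 0 ≤ lam) (w : E) : 0 ≤ svmPrimal lam x y w := by
  unfold svmPrimal
  have : ∀ i, 0 ≤ max 0 (1 - y i * ⟪w, x i⟫) := fun _ => le_max_left _ _
  positivity

theorem svmPrimal_zero (hn : 0 < n) : svmPrimal lam x y 0 = 1 := by
  simp [svmPrimal, hn.ne']

theorem svmPrimal_of_margin {u : E} (hmargin : ∀ i, 1 ≤ y i * ⟪u, x i⟫) :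
    svmPrimal lam x y u = lam / 2 * ‖u‖ ^ 2 := by
  have hloss : ∀ i, max 0 (1 - y i * ⟪u, x i⟫) = 0 := fun i =>
    max_eq_left (by linarith [hmargin i])
  simp [svmPrimal, hloss]

theorem zero_mem_svmDualFeasible (hlam : 0 ≤ lam) : (0 : Fin n → ℝ) ∈ svmDualFeasible lam n :=
  fun _ => ⟨le_rfl, by positivity⟩

theorem mul_le_div_of_mem_svmDualFeasible (hlam : 0 < lam) {α : Fin n → ℝ}
    (hα : α ∈ svmDualFeasible lam n) (i : Fin n) : lam * α i ≤ 1 / n := by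
  have h := (hα i).2
  rw [mul_comm, ← div_div, le_div_iff₀ hlam] at h
  linarith

theorem svmDual_le_svmPrimal (hlam : 0 < lam) {α : Fin n → ℝ} (hα : α ∈ svmDualFeasible lam n)
    (w : E) : svmDual lam x y α ≤ svmPrimal lam x y w := by
  rw [svmDual_eq, svmPrimal]
  set v := ∑ i, (α i * y i) • x i
  have hterm : ∀ i, lam * α i * (1 - y i * ⟪w, x i⟫) ≤ 1 / n * max 0 (1 - y i * ⟪w, x i⟫) :=
    fun i => calc
      _ ≤ lam * α i * max 0 (1 - y i * ⟪w, x i⟫) :=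
        mul_le_mul_of_nonneg_left (le_max_right _ _) (by nlinarith [(hα i).1])
      _ ≤ _ := mul_le_mul_of_nonneg_right (mul_le_div_of_mem_svmDualFeasible hlam hα i)
        (le_max_left _ _)
  have hpair : ∑ i, lam * α i * (y i * ⟪w, x i⟫) = lam * ⟪w, v⟫ := by
    simp only [v, inner_sum, real_inner_smul_right, mul_sum]
    exact sum_congr rfl fun i _ => by ring
  have hloss : lam * (∑ i, α i) - lam * ⟪w, v⟫ ≤ 1 / n * ∑ i, max 0 (1 - y i * ⟪w, x i⟫) := by
    rw [mul_sum, mul_sum, ← hpair, ← sum_sub_distrib]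
    exact sum_le_sum fun i _ => by linarith [hterm i]
  have hsq : 0 ≤ lam / 2 * ‖w - v‖ ^ 2 := by positivity
  rw [norm_sub_sq_real] at hsq
  linarith

theorem svm_gap_of_margin (hlam : 0 < lam) (hn : 0 < n) {u : E} (hu : ‖u‖ = 1)
    (hmargin : ∀ i, 1 ≤ y i * ⟪u, x i⟫) :
    (⨅ w, svmPrimal lam x y w) ≤ lam / 2 ∧
      (⨆ α ∈ svmDualFeasible lam n, svmDual lam x y α) - svmDual lam x y 0 ≤ lam / 2 ∧
      1 - lam / 2 ≤ svmPrimal lam x y 0 - ⨅ w, svmPrimal lam x y w := by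
  have hPu : svmPrimal lam x y u = lam / 2 := by simp [svmPrimal_of_margin hmargin, hu]
  have hbdd : BddBelow (Set.range (svmPrimal lam x y)) :=
    ⟨0, Set.forall_mem_range.2 (svmPrimal_nonneg hlam.le)⟩
  have hinf : (⨅ w, svmPrimal lam x y w) ≤ lam / 2 := hPu ▸ ciInf_le hbdd u
  have hsup : (⨆ α ∈ svmDualFeasible lam n, svmDual lam x y α) ≤ lam / 2 :=
    Real.iSup_le (fun α => Real.iSup_le (fun hα => hPu ▸ svmDual_le_svmPrimal hlam hα u)
      (by positivity)) (by positivity)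
  refine ⟨hinf, by simpa using hsup, ?_⟩
  rw [svmPrimal_zero hn]
  linarith

end SVM

theorem dual_suboptimality_does_not_control_primal :
    ∀ ε : ℝ, 0 < ε →
      ∃ (d n : ℕ), 0 < n ∧
      ∃ (x : Fin n → EuclideanSpace ℝ (Fin d)) (y : Fin n → ℝ),
        (∀ i, y i = 1 ∨ y i = -1) ∧
        -- separable with margin: ∃ u, ‖u‖ = 1, zero hinge loss on the data
        (∃ u : EuclideanSpace ℝ (Fin d), ‖u‖ = 1 ∧ ∀ i, 1 ≤ y i * (inner ℝ u (x i) : ℝ)) ∧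
        -- with λ = 2ε, primal P and dual D as below:
        (let lam : ℝ := 2 * ε
         let P : EuclideanSpace ℝ (Fin d) → ℝ := fun w =>
           lam / 2 * ‖w‖ ^ 2 + (1 / (n : ℝ)) * ∑ i, max 0 (1 - y i * (inner ℝ w (x i) : ℝ))
         let D : (Fin n → ℝ) → ℝ := fun α =>
           lam * ((∑ i, α i) -
             (1 : ℝ) / 2 * ∑ i, ∑ j, α i * α j * (y i * y j * (inner ℝ (x i) (x j) : ℝ)))
         -- P* ≤ ε
         (⨅ w, P w) ≤ ε ∧
         -- α = 0 is dual feasible and ε-suboptimal in the dual: D* − D(0) ≤ ε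
         (∀ i : Fin n, (0 : ℝ) ∈ Set.Icc (0 : ℝ) (1 / (lam * n))) ∧
         (⨆ α ∈ {α : Fin n → ℝ | ∀ i, α i ∈ Set.Icc (0 : ℝ) (1 / (lam * n))}, D α)
             - D 0 ≤ ε ∧
         -- yet the corresponding primal point w = Σᵢ 0·yᵢxᵢ = 0 is (1−ε)-suboptimal
         1 - ε ≤ P 0 - (⨅ w, P w)) := by
  intro ε hε
  set e : EuclideanSpace ℝ (Fin 1) := EuclideanSpace.single 0 1
  have he : ‖e‖ = 1 := by simp [e]
  have hmargin : ∀ i : Fin 1, 1 ≤ 1 * ⟪e, e⟫ := fun _ => by simp [he]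
  have hlam : (0 : ℝ) < 2 * ε := by positivity
  obtain ⟨hinf, hsup, hgap⟩ := svm_gap_of_margin (x := fun _ => e) (y := fun _ => 1) hlam
    one_pos he hmargin
  rw [mul_div_cancel_left₀ ε two_ne_zero] at hinf hsup hgap
  exact ⟨1, 1, one_pos, fun _ => e, fun _ => 1, fun _ => Or.inl rfl, ⟨e, he, hmargin⟩,
    hinf, zero_mem_svmDualFeasible hlam.le, hsup, hgap⟩
end

section
/- Let α ∈ [0, C]ⁿ with C = 1/(λn) and w = Σᵢ αᵢyᵢxᵢ. If the duality gap P(w) − D(α) is at most 2ε, then the number of nonzero entries of α satisfies ‖α‖₀ ≥ n(P(w*) − 2ε), where w* is the primal optimum. -/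
/-!
Optimality of `w*` and the gap bound give `P(w*) - 2ε ≤ P(w) - 2ε ≤ D(α)`. The quadratic part of
the dual is `‖∑ αᵢ yᵢ xᵢ‖² ≥ 0`, so `D(α) ≤ λ ∑ αᵢ`, and since each of the `‖α‖₀` nonzero `αᵢ`
is at most `C = 1/(λn)`, `n λ ∑ αᵢ ≤ ‖α‖₀`.
-/

open Finset

theorem norm_sum_smul_smul_sq {H ι : Type*} [NormedAddCommGroup H] [InnerProductSpace ℝ H]
    [Fintype ι] (α y : ι → ℝ) (x : ι → H) :
    ‖∑ i, α i • (y i • x i)‖ ^ 2 =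
      ∑ i, ∑ j, α i * α j * (y i * y j * (inner ℝ (x i) (x j) : ℝ)) := by
  rw [← real_inner_self_eq_norm_sq]
  simp only [sum_inner, inner_sum, real_inner_smul_left, real_inner_smul_right]
  exact sum_congr rfl fun i _ => sum_congr rfl fun j _ => by rw [real_inner_comm]; ring

theorem sum_le_card_filter_ne_zero_mul {ι : Type*} (s : Finset ι) (a : ι → ℝ) {b : ℝ}
    (h : ∀ i ∈ s, a i ≤ b) : ∑ i ∈ s, a i ≤ #{i ∈ s | a i ≠ 0} * b := by
  rw [← sum_filter_ne_zero, ← nsmul_eq_mul]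
  exact sum_le_card_nsmul _ _ _ fun i hi => h i (mem_filter.1 hi).1

noncomputable section

namespace HingeSVM

variable {H : Type*} [NormedAddCommGroup H] [InnerProductSpace ℝ H] {n : ℕ}

def primal (lam : ℝ) (x : Fin n → H) (y : Fin n → ℝ) (v : H) : ℝ :=
  lam / 2 * ‖v‖ ^ 2 + (1 / (n : ℝ)) * ∑ i, max 0 (1 - y i * (inner ℝ v (x i) : ℝ))

def dual (lam : ℝ) (x : Fin n → H) (y : Fin n → ℝ) (α : Fin n → ℝ) : ℝ :=
  lam * ((∑ i, α i) -
    (1 : ℝ) / 2 * ∑ i, ∑ j, α i * α j * (y i * y j * (inner ℝ (x i) (x j) : ℝ)))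

theorem dual_le_mul_sum {lam : ℝ} (hlam : 0 ≤ lam) (x : Fin n → H) (y α : Fin n → ℝ) :
    dual lam x y α ≤ lam * ∑ i, α i := by
  have hquad : 0 ≤ lam * ‖∑ i, α i • (y i • x i)‖ ^ 2 := by positivity
  rw [dual, ← norm_sum_smul_smul_sq]
  linarith

theorem natCast_mul_dual_le_card {lam : ℝ} (hlam : 0 ≤ lam) (x : Fin n → H) (y α : Fin n → ℝ)
    (hα : ∀ i, α i ≤ 1 / (lam * n)) :
    (n : ℝ) * dual lam x y α ≤ #{i | α i ≠ 0} := by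
  have hsum : ∑ i, α i ≤ #{i | α i ≠ 0} * (1 / (lam * n)) :=
    sum_le_card_filter_ne_zero_mul univ α fun i _ => hα i
  calc (n : ℝ) * dual lam x y α ≤ n * (lam * ∑ i, α i) := by
        gcongr
        exact dual_le_mul_sum hlam x y α
    _ = (lam * n) * ∑ i, α i := by ring
    _ ≤ (lam * n) * (#{i | α i ≠ 0} * (1 / (lam * n))) := by gcongr
    _ = #{i | α i ≠ 0} * ((lam * n) * (lam * n)⁻¹) := by ring
    _ ≤ #{i | α i ≠ 0} := mul_le_of_le_one_right (by positivity) mul_inv_le_one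

end HingeSVM

end

open HingeSVM in
theorem support_size_lower_bound_from_duality_gap_general
    {H : Type*} [NormedAddCommGroup H] [InnerProductSpace ℝ H]
    (n : ℕ) (lam : ℝ) (hlam : 0 < lam)
    (x : Fin n → H) (y : Fin n → ℝ)
    (α : Fin n → ℝ) (hα : ∀ i, α i ∈ Set.Icc (0 : ℝ) (1 / (lam * n)))
    (w wstar : H)
    -- wstar is the primal optimum
    (hstar : ∀ v : H,
      lam / 2 * ‖wstar‖ ^ 2 + (1 / (n : ℝ)) * ∑ i, max 0 (1 - y i * (inner ℝ wstar (x i) : ℝ)) ≤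
        lam / 2 * ‖v‖ ^ 2 + (1 / (n : ℝ)) * ∑ i, max 0 (1 - y i * (inner ℝ v (x i) : ℝ)))
    (ε : ℝ)
    -- duality gap P(w) − D(α) ≤ 2ε
    (hgap :
      (lam / 2 * ‖w‖ ^ 2 + (1 / (n : ℝ)) * ∑ i, max 0 (1 - y i * (inner ℝ w (x i) : ℝ))) -
        lam * ((∑ i, α i) -
          (1 : ℝ) / 2 * ∑ i, ∑ j, α i * α j * (y i * y j * (inner ℝ (x i) (x j) : ℝ))) ≤ 2 * ε) :
    (n : ℝ) * ((lam / 2 * ‖wstar‖ ^ 2 +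
        (1 / (n : ℝ)) * ∑ i, max 0 (1 - y i * (inner ℝ wstar (x i) : ℝ))) - 2 * ε) ≤
      ((Finset.univ.filter (fun i : Fin n => α i ≠ 0)).card : ℝ) := by
  have hopt : primal lam x y wstar ≤ primal lam x y w := hstar w
  have hgap' : primal lam x y w - dual lam x y α ≤ 2 * ε := hgap
  calc (n : ℝ) * (primal lam x y wstar - 2 * ε) ≤ n * dual lam x y α := by
        gcongr
        linarith
    _ ≤ _ := natCast_mul_dual_le_card hlam.le x y α fun i => (hα i).2

theorem support_size_lower_bound_from_duality_gap
    {H : Type*} [NormedAddCommGroup H] [InnerProductSpace ℝ H]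
    (n : ℕ) (hn : 0 < n) (lam : ℝ) (hlam : 0 < lam)
    (x : Fin n → H) (y : Fin n → ℝ) (hy : ∀ i, y i = 1 ∨ y i = -1)
    (α : Fin n → ℝ) (hα : ∀ i, α i ∈ Set.Icc (0 : ℝ) (1 / (lam * n)))
    (w wstar : H) (hw : w = ∑ i, α i • (y i • x i))
    -- wstar is the primal optimum
    (hstar : ∀ v : H,
      lam / 2 * ‖wstar‖ ^ 2 + (1 / (n : ℝ)) * ∑ i, max 0 (1 - y i * (inner ℝ wstar (x i) : ℝ)) ≤
        lam / 2 * ‖v‖ ^ 2 + (1 / (n : ℝ)) * ∑ i, max 0 (1 - y i * (inner ℝ v (x i) : ℝ)))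
    (ε : ℝ)
    -- duality gap P(w) − D(α) ≤ 2ε
    (hgap :
      (lam / 2 * ‖w‖ ^ 2 + (1 / (n : ℝ)) * ∑ i, max 0 (1 - y i * (inner ℝ w (x i) : ℝ))) -
        lam * ((∑ i, α i) -
          (1 : ℝ) / 2 * ∑ i, ∑ j, α i * α j * (y i * y j * (inner ℝ (x i) (x j) : ℝ))) ≤ 2 * ε) :
    (n : ℝ) * ((lam / 2 * ‖wstar‖ ^ 2 +
        (1 / (n : ℝ)) * ∑ i, max 0 (1 - y i * (inner ℝ wstar (x i) : ℝ))) - 2 * ε) ≤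
      ((Finset.univ.filter (fun i : Fin n => α i ≠ 0)).card : ℝ) :=
  support_size_lower_bound_from_duality_gap_general n lam hlam x y α hα w wstar hstar ε hgap
end

section
/- For shift-invariant approximation via random Fourier features with Gaussian samples v₁,…,v_k ~ N(0, I_d) i.i.d., the map P(x) ∈ ℝ^{2k} with entries P(x)_{2i} = (1/√k)cos(⟨vᵢ,x⟩/σ) and P(x)_{2i+1} = (1/√k)sin(⟨vᵢ,x⟩/σ) satisfies E[⟨P(x),P(x')⟩] = exp(−‖x−x'‖²/(2σ²)) for all x, x' ∈ ℝᵈ, i.e., the inner product of Fourier features is an unbiased estimator of the Gaussian kernel. -/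
/-!
Writing `a = ⟨v, x⟩ / σ` and `b = ⟨v, x'⟩ / σ`, each summand of `⟨P(x), P(x')⟩` is
`cos a cos b + sin a sin b = cos (a - b) = cos ⟨v, (x - x') / σ⟩`, scaled by `1 / k`.
By linearity and since each `vᵢ` is a standard Gaussian, the expectation is
`E[cos ⟨v, z⟩]` with `z = (x - x') / σ`, the real part of the characteristic function
`exp (-‖z‖² / 2)` of the standard Gaussian.
-/

open Finset MeasureTheory ProbabilityTheory
open scoped RealInnerProductSpace

lemma integral_cos_inner_eq_charFun_re {E : Type*} [NormedAddCommGroup E]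
    [InnerProductSpace ℝ E] [MeasurableSpace E] [OpensMeasurableSpace E]
    (μ : Measure E) [IsFiniteMeasure μ] (t : E) :
    ∫ x, Real.cos ⟪x, t⟫ ∂μ = (charFun μ t).re := by
  have hint : Integrable (fun x => Complex.exp (⟪x, t⟫ * Complex.I)) μ := by
    refine Integrable.of_bound (by fun_prop) 1 (ae_of_all _ fun x => ?_)
    rw [Complex.norm_exp_ofReal_mul_I]
  rw [charFun_apply, ← RCLike.re_to_complex, ← integral_re hint]
  simp only [RCLike.re_to_complex, Complex.exp_ofReal_mul_I_re]

lemma integral_cos_inner_stdGaussian {E : Type*} [NormedAddCommGroup E]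
    [InnerProductSpace ℝ E] [FiniteDimensional ℝ E] [MeasurableSpace E] [BorelSpace E] (t : E) :
    ∫ x, Real.cos ⟪x, t⟫ ∂stdGaussian E = Real.exp (-‖t‖ ^ 2 / 2) := by
  rw [integral_cos_inner_eq_charFun_re, charFun_stdGaussian, ← Complex.ofReal_pow,
    ← Complex.ofReal_neg, ← Complex.ofReal_ofNat, ← Complex.ofReal_div, Complex.exp_ofReal_re]

lemma integral_cos_sum_mul_pi_gaussianReal {ι : Type*} [Fintype ι] (c : ι → ℝ) :
    ∫ w : ι → ℝ, Real.cos (∑ j, w j * c j) ∂Measure.pi (fun _ => gaussianReal 0 1) =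
      Real.exp (-(∑ j, c j ^ 2) / 2) := by
  have h := integral_cos_inner_stdGaussian (WithLp.toLp 2 c : EuclideanSpace ℝ ι)
  rw [← map_pi_eq_stdGaussian, integral_map (by fun_prop) (by fun_prop),
    EuclideanSpace.real_norm_sq_eq] at h
  simpa [PiLp.inner_apply, mul_comm] using h

lemma integral_average_comp_eval_pi {ι X : Type*} [Fintype ι] [Nonempty ι] [MeasurableSpace X]
    (μ : Measure X) [IsProbabilityMeasure μ] {f : X → ℝ} (hf : Integrable f μ) :
    ∫ v : ι → X, ∑ i, (1 / (Fintype.card ι : ℝ)) * f (v i) ∂Measure.pi (fun _ => μ) =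
      ∫ x, f x ∂μ := by
  rw [integral_finsetSum _ fun i _ => (integrable_comp_eval (i := i) hf).const_mul _]
  have hmarginal (i : ι) : ∫ v : ι → X, f (v i) ∂Measure.pi (fun _ => μ) = ∫ x, f x ∂μ :=
    integral_comp_eval hf.aestronglyMeasurable
  simp only [integral_const_mul, hmarginal, sum_const, card_univ, nsmul_eq_mul]
  field_simp

theorem random_fourier_features_unbiased_general
    (d k : ℕ) (hk : 0 < k) (σ : ℝ) (x x' : Fin d → ℝ) :
    (∫ v : Fin k → (Fin d → ℝ),
        ∑ i, (1 / (k : ℝ)) *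
          (Real.cos ((∑ j, v i j * x j) / σ) * Real.cos ((∑ j, v i j * x' j) / σ) +
           Real.sin ((∑ j, v i j * x j) / σ) * Real.sin ((∑ j, v i j * x' j) / σ))
        ∂(Measure.pi fun _ : Fin k => Measure.pi fun _ : Fin d => gaussianReal 0 1)) =
      Real.exp (-(∑ j, (x j - x' j) ^ 2) / (2 * σ ^ 2)) := by
  have : Nonempty (Fin k) := Fin.pos_iff_nonempty.mp hk
  set c : Fin d → ℝ := fun j => (x j - x' j) / σ
  have hfeature : ∀ w : Fin d → ℝ,
      Real.cos ((∑ j, w j * x j) / σ) * Real.cos ((∑ j, w j * x' j) / σ) +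
        Real.sin ((∑ j, w j * x j) / σ) * Real.sin ((∑ j, w j * x' j) / σ) =
      Real.cos (∑ j, w j * c j) := fun w => by
    rw [← Real.cos_sub, ← sub_div, ← sum_sub_distrib, sum_div]
    exact congrArg Real.cos (sum_congr rfl fun j _ => by ring)
  have hint : Integrable (fun w : Fin d → ℝ => Real.cos (∑ j, w j * c j))
      (Measure.pi fun _ => gaussianReal 0 1) :=
    Integrable.of_bound (Continuous.aestronglyMeasurable (by fun_prop)) 1
      (ae_of_all _ fun w => Real.abs_cos_le_one _)
  have hcard : (k : ℝ) = Fintype.card (Fin k) := by simp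
  simp only [hfeature, hcard]
  rw [integral_average_comp_eval_pi _ hint, integral_cos_sum_mul_pi_gaussianReal]
  simp only [c, div_pow, ← sum_div]
  congr 1
  ring

theorem random_fourier_features_unbiased
    (d k : ℕ) (hk : 0 < k) (σ : ℝ) (hσ : 0 < σ) (x x' : Fin d → ℝ) :
    (∫ v : Fin k → (Fin d → ℝ),
        ∑ i, (1 / (k : ℝ)) *
          (Real.cos ((∑ j, v i j * x j) / σ) * Real.cos ((∑ j, v i j * x' j) / σ) +
           Real.sin ((∑ j, v i j * x j) / σ) * Real.sin ((∑ j, v i j * x' j) / σ))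
        ∂(Measure.pi fun _ : Fin k => Measure.pi fun _ : Fin d => gaussianReal 0 1)) =
      Real.exp (-(∑ j, (x j - x' j) ^ 2) / (2 * σ ^ 2)) :=
  random_fourier_features_unbiased_general d k hk σ x x'
end

section
/- Let c ∈ ℝⁿ, V > 0, γ the water level with Σᵢ(γ−cᵢ)₊ = V, and ξ*ᵢ = (γ−cᵢ)₊. If p ∈ Δⁿ assigns pᵢ > pⱼ for two indices with ξ*ᵢ > 0 and ξ*ⱼ > 0, then p is not minimax optimal: there exists a feasible ξ with pᵀ(c+ξ) > γ, so max_{ξ⪰0,1ᵀξ≤V} pᵀ(c+ξ) > γ = min-max value. Hence any minimax optimal p must be constant on {i : cᵢ < γ}. -/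
/-!
The water-filling slack ξ*ₗ = (γ − cₗ)₊ is feasible and already gives pᵀ(c + ξ*) ≥ γ, because
cₗ + ξ*ₗ ≥ γ for every l. If p j < p i with ξ*ⱼ > 0, moving the slack ξ*ⱼ from j to i keeps the
slack feasible and raises the payoff by (p i − p j) ξ*ⱼ > 0.
-/

open Finset

section SlackTransfer

variable {ι : Type*} [DecidableEq ι]

def transferSlack (ξ : ι → ℝ) (i j : ι) (ε : ℝ) : ι → ℝ :=
  ξ + Pi.single i ε - Pi.single j ε

theorem sum_transferSlack [Fintype ι] (ξ : ι → ℝ) (i j : ι) (ε : ℝ) :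
    ∑ l, transferSlack ξ i j ε l = ∑ l, ξ l := by
  simp [transferSlack, sum_add_distrib, sum_sub_distrib]

theorem transferSlack_nonneg {ξ : ι → ℝ} {i j : ι} {ε : ℝ} (hij : i ≠ j)
    (hξ : ∀ l, 0 ≤ ξ l) (hε : 0 ≤ ε) (hεj : ε ≤ ξ j) (l : ι) :
    0 ≤ transferSlack ξ i j ε l := by
  simp only [transferSlack, Pi.add_apply, Pi.sub_apply, Pi.single_apply]
  have := hξ l
  split_ifs with hli hlj hlj <;> subst_vars <;> first | exact absurd rfl hij | linarith

theorem sum_mul_add_transferSlack [Fintype ι] (p c ξ : ι → ℝ) (i j : ι) (ε : ℝ) :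
    ∑ l, p l * (c l + transferSlack ξ i j ε l) =
      ∑ l, p l * (c l + ξ l) + (p i - p j) * ε := by
  simp only [transferSlack, Pi.add_apply, Pi.sub_apply, mul_add, mul_sub, sum_add_distrib,
    sum_sub_distrib, Pi.single_apply, mul_ite, mul_zero, sum_ite_eq', mem_univ, if_true]
  ring

end SlackTransfer

theorem le_sum_mul_add_max_zero_sub {ι : Type*} [Fintype ι] {p : ι → ℝ}
    (hp_nonneg : ∀ i, 0 ≤ p i) (hp_sum : ∑ i, p i = 1) (c : ι → ℝ) (γ : ℝ) :
    γ ≤ ∑ l, p l * (c l + max 0 (γ - c l)) :=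
  calc γ = ∑ l, p l * γ := by rw [← sum_mul, hp_sum, one_mul]
    _ ≤ ∑ l, p l * (c l + max 0 (γ - c l)) :=
      sum_le_sum fun l _ => mul_le_mul_of_nonneg_left
        (by linarith [le_max_right 0 (γ - c l)]) (hp_nonneg l)

theorem exists_slack_gt_of_wet_of_lt {ι : Type*} [Fintype ι] [DecidableEq ι] {c : ι → ℝ}
    {V γ : ℝ} (hγ : ∑ i, max 0 (γ - c i) = V) {p : ι → ℝ} (hp_nonneg : ∀ i, 0 ≤ p i)
    (hp_sum : ∑ i, p i = 1) {i j : ι} (hj : 0 < max 0 (γ - c j)) (hpij : p j < p i) :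
    ∃ ξ : ι → ℝ, (∀ l, 0 ≤ ξ l) ∧ (∑ l, ξ l) ≤ V ∧ γ < ∑ l, p l * (c l + ξ l) := by
  have hij : i ≠ j := by rintro rfl; exact lt_irrefl _ hpij
  set ξ : ι → ℝ := fun l => max 0 (γ - c l)
  refine ⟨transferSlack ξ i j (ξ j),
    transferSlack_nonneg hij (fun l => le_max_left _ _) hj.le le_rfl, ?_, ?_⟩
  · rw [sum_transferSlack, hγ]
  · rw [sum_mul_add_transferSlack]
    linarith [le_sum_mul_add_max_zero_sub hp_nonneg hp_sum c γ, mul_pos (sub_pos.2 hpij) hj]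

theorem minimax_optimal_p_constant_on_wet_set_general
    (n : ℕ) (c : Fin n → ℝ) (V γ : ℝ)
    -- the water level equation Σᵢ (γ − cᵢ)₊ = V
    (hγ : ∑ i, max 0 (γ - c i) = V)
    (p : Fin n → ℝ) (hp_nonneg : ∀ i, 0 ≤ p i) (hp_sum : ∑ i, p i = 1) :
    -- if p puts unequal mass on two wet indices, a feasible slack beats γ
    (∀ i j : Fin n, 0 < max 0 (γ - c i) → 0 < max 0 (γ - c j) → p j < p i →
      ∃ ξ : Fin n → ℝ, (∀ l, 0 ≤ ξ l) ∧ (∑ l, ξ l) ≤ V ∧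
        γ < ∑ l, p l * (c l + ξ l)) ∧
    -- hence any minimax optimal p is constant on {i : cᵢ < γ}
    ((∀ ξ : Fin n → ℝ, (∀ l, 0 ≤ ξ l) → (∑ l, ξ l) ≤ V →
        ∑ l, p l * (c l + ξ l) ≤ γ) →
      ∀ i j : Fin n, c i < γ → c j < γ → p i = p j) := by
  refine ⟨fun i j _ hj hpij => exists_slack_gt_of_wet_of_lt hγ hp_nonneg hp_sum hj hpij,
    fun hopt i j hi hj => ?_⟩
  have le_of_wet : ∀ a b : Fin n, c b < γ → p a ≤ p b := fun a b hb => not_lt.1 fun hpab => by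
    obtain ⟨ξ, hξ, hξV, hgt⟩ :=
      exists_slack_gt_of_wet_of_lt hγ hp_nonneg hp_sum (lt_max_of_lt_right (sub_pos.2 hb)) hpab
    exact (hopt ξ hξ hξV).not_gt hgt
  exact le_antisymm (le_of_wet i j hj) (le_of_wet j i hi)

theorem minimax_optimal_p_constant_on_wet_set
    (n : ℕ) (hn : 0 < n) (c : Fin n → ℝ) (V γ : ℝ) (hV : 0 < V)
    -- the water level equation Σᵢ (γ − cᵢ)₊ = V
    (hγ : ∑ i, max 0 (γ - c i) = V)
    (p : Fin n → ℝ) (hp_nonneg : ∀ i, 0 ≤ p i) (hp_sum : ∑ i, p i = 1) :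
    -- if p puts unequal mass on two wet indices, a feasible slack beats γ
    (∀ i j : Fin n, 0 < max 0 (γ - c i) → 0 < max 0 (γ - c j) → p j < p i →
      ∃ ξ : Fin n → ℝ, (∀ l, 0 ≤ ξ l) ∧ (∑ l, ξ l) ≤ V ∧
        γ < ∑ l, p l * (c l + ξ l)) ∧
    -- hence any minimax optimal p is constant on {i : cᵢ < γ}
    ((∀ ξ : Fin n → ℝ, (∀ l, 0 ≤ ξ l) → (∑ l, ξ l) ≤ V →
        ∑ l, p l * (c l + ξ l) ≤ γ) →
      ∀ i j : Fin n, c i < γ → c j < γ → p i = p j) :=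
  minimax_optimal_p_constant_on_wet_set_general n c V γ hγ p hp_nonneg hp_sum
end

section
/- If the expected number of Perceptron mistakes on an i.i.d. sample of size n is at most nL(u) + r‖u‖√(nL(u)) + r²‖u‖², then choosing n = O(((L(u)+ε)/ε)·(r²‖u‖²/ε)) guarantees that the classifier w sampled uniformly from the Perceptron iterates w₁,…,wₙ satisfies E[L₀/₁(w)] ≤ L(u) + ε. -/
/-!
Write `a = r‖u‖`. The sample size condition with constant `4` reads `4 (L + ε) a² ≤ n ε²`.
Its `L`-part gives `(a √(nL))² = a² n L ≤ (n ε / 2)²`, and its `ε`-part gives `a² ≤ n ε / 4`,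
so the two excess terms of the mistake bound together cost at most `n ε`.
-/

lemma mul_sqrt_mul_le_half {a n L ε : ℝ} (ha : 0 ≤ a) (hn : 0 ≤ n) (hε : 0 ≤ ε)
    (h : 4 * L * a ^ 2 ≤ n * ε ^ 2) : a * Real.sqrt (n * L) ≤ n * ε / 2 := by
  calc a * Real.sqrt (n * L)
      = Real.sqrt (a ^ 2 * (n * L)) := by
        rw [Real.sqrt_mul (sq_nonneg a), Real.sqrt_sq ha]
    _ ≤ Real.sqrt ((n * ε / 2) ^ 2) := Real.sqrt_le_sqrt (by nlinarith)
    _ = n * ε / 2 := Real.sqrt_sq (by positivity)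

lemma mistake_bound_div_le {a n L ε : ℝ} (ha : 0 ≤ a) (hn : 0 < n) (hL : 0 ≤ L) (hε : 0 < ε)
    (h : 4 * (L + ε) * a ^ 2 ≤ n * ε ^ 2) :
    (n * L + a * Real.sqrt (n * L) + a ^ 2) / n ≤ L + ε := by
  have hLa : 0 ≤ L * a ^ 2 := by positivity
  have hεa : 0 ≤ ε * a ^ 2 := by positivity
  have hcross : a * Real.sqrt (n * L) ≤ n * ε / 2 :=
    mul_sqrt_mul_le_half ha hn.le hε.le (by linarith)
  have hquad : a ^ 2 ≤ n * ε / 2 := by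
    have hscaled : ε * (4 * a ^ 2) ≤ ε * (n * ε) := by linarith
    linarith [le_of_mul_le_mul_left hscaled hε, mul_pos hn hε]
  rw [div_le_iff₀ hn]
  linarith

lemma le_of_sample_size_le {C L ε A n : ℝ} (hε : 0 < ε)
    (h : C * ((L + ε) / ε) * (A / ε) ≤ n) : C * (L + ε) * A ≤ n * ε ^ 2 := by
  have hrw : C * ((L + ε) / ε) * (A / ε) = C * (L + ε) * A / ε ^ 2 := by
    field_simp
  rwa [hrw, div_le_iff₀ (by positivity)] at h

theorem perceptron_online_to_batch_sample_size :
    ∃ C > 0, ∀ (n : ℕ) (L r nu ε E : ℝ),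
      0 < n → 0 ≤ L → 0 ≤ r → 0 ≤ nu → 0 < ε →
      -- online-to-batch: E[L₀/₁(w)] = (1/n)·E[#mistakes], bounded via the mistake bound
      E ≤ ((n : ℝ) * L + r * nu * Real.sqrt ((n : ℝ) * L) + r ^ 2 * nu ^ 2) / n →
      -- sample size n = O(((L(u)+ε)/ε)·(r²‖u‖²/ε))
      C * ((L + ε) / ε) * (r ^ 2 * nu ^ 2 / ε) ≤ (n : ℝ) →
      E ≤ L + ε := by
  refine ⟨4, by norm_num, ?_⟩
  intro n L r nu ε E hn hL hr hnu hε hE hN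
  have hsize : 4 * (L + ε) * (r * nu) ^ 2 ≤ n * ε ^ 2 := by
    rw [mul_pow]
    exact le_of_sample_size_le hε hN
  have hbound := mistake_bound_div_le (mul_nonneg hr hnu) (Nat.cast_pos.mpr hn) hL hε hsize
  rw [mul_pow] at hbound
  exact hE.trans hbound
end
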